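/- Let σ be a prefix normal word chain generator of length n and j ∈ [n−1] with σ(j) < σ(j+1). Then the permutation σ' obtained from σ by swapping the values at positions j and j+1 (i.e., σ'(j) = σ(j+1), σ'(j+1) = σ(j), σ'(k) = σ(k) otherwise) is also a prefix normal word chain generator. -/

import Mathlib

/-- A binary word (list of booleans, `true` = letter 1) is prefix normal if every
factor has at most as many 1s as the prefix of the same length. -/
def prefixNormal (w : List Bool) : Prop :=
  ∀ v : List Bool, v <:+: w → v.count true ≤ (w.take v.length).count true

/-- The word chain of a permutation σ of positions (0-indexed): `pnChain σ 0 = 1^n`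
and `pnChain σ (k+1)` flips position `σ k` of `pnChain σ k` from 1 to 0.
(`pnChain σ k` corresponds to the paper's `c_σ[k+1]`.) -/
def pnChain {n : ℕ} (σ : Equiv.Perm (Fin n)) : ℕ → List Bool
  | 0 => List.replicate n true
  | k + 1 => if h : k < n then (pnChain σ k).set (σ ⟨k, h⟩) false else pnChain σ k

/-- σ is a prefix normal word chain generator iff every word of its chain is prefix normal. -/
def isPNGen {n : ℕ} (σ : Equiv.Perm (Fin n)) : Prop :=
  ∀ k ≤ n, prefixNormal (pnChain σ k)


/-! Position `i` of the word chain of `σ` holds a 1 until step `σ⁻¹ i`, so swapping the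
adjacent steps `j` and `j + 1` changes a single word, the one after step `j`: it now zeroes
`q = σ (j + 1)` instead of `a = σ j < q`. A word is prefix normal iff its prefix weight `P(m)`,
the number of 1s among its first `m` letters, is subadditive, and the new word inherits
`P(s + ℓ) ≤ P(s) + P(ℓ)` from the word before step `j` when `s, ℓ ≤ a`, and from the word after
step `j + 1` otherwise. -/

def prefixWeight (w : List Bool) (m : ℕ) : ℕ := (w.take m).count true

lemma prefixWeight_mono (w : List Bool) {m m' : ℕ} (h : m ≤ m') :
    prefixWeight w m ≤ prefixWeight w m' :=
  (List.take_sublist_take_left h).count_le true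

lemma prefixWeight_add (w : List Bool) (s ℓ : ℕ) :
    prefixWeight w (s + ℓ) = prefixWeight w s + ((w.drop s).take ℓ).count true := by
  rw [prefixWeight, prefixWeight, List.take_add, List.count_append]

lemma prefixNormal_iff_prefixWeight_add_le (w : List Bool) :
    prefixNormal w ↔ ∀ s ℓ : ℕ, prefixWeight w (s + ℓ) ≤ prefixWeight w s + prefixWeight w ℓ := by
  constructor
  · intro h s ℓ
    have hinfix : (w.drop s).take ℓ <:+: w :=
      ⟨w.take s, (w.drop s).drop ℓ, by simp⟩
    have hlen : ((w.drop s).take ℓ).length ≤ ℓ := List.length_take_le _ _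
    rw [prefixWeight_add]
    exact Nat.add_le_add_left ((h _ hinfix).trans (prefixWeight_mono w hlen)) _
  · rintro h v ⟨t, u, rfl⟩
    have := h t.length v.length
    rw [prefixWeight_add] at this
    simpa [prefixWeight, List.drop_append, List.take_append] using this

lemma prefixWeight_eq_prefixWeight_set_false_add {w : List Bool} {p : ℕ} (hp : p < w.length)
    (hw : w[p] = true) (m : ℕ) :
    prefixWeight w m = prefixWeight (w.set p false) m + if p < m then 1 else 0 := by
  have hsplit : w = w.take p ++ true :: w.drop (p + 1) := by
    rw [← hw, ← List.drop_eq_getElem_cons hp, List.take_append_drop]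
  have hlen : (w.take p).length = p := List.length_take_of_le hp.le
  rw [List.set_eq_take_cons_drop false hp]
  generalize w.take p = u, w.drop (p + 1) = v at hsplit hlen
  subst hsplit hlen
  simp only [prefixWeight, List.take_append, List.count_append]
  split_ifs with hm
  · obtain ⟨r, hr⟩ : ∃ r, m - u.length = r + 1 := ⟨m - u.length - 1, by omega⟩
    simp [hr, Nat.add_assoc]
  · simp [Nat.sub_eq_zero_of_le (not_lt.mp hm)]

lemma prefixNormal_set_false_of_set_false_set_false {w : List Bool} {a q : ℕ} (haq : a < q)
    (hq : q < w.length) (ha1 : w[a] = true) (hq1 : w[q] = true) (hw : prefixNormal w)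
    (hwaq : prefixNormal ((w.set a false).set q false)) :
    prefixNormal (w.set q false) := by
  rw [prefixNormal_iff_prefixWeight_add_le] at hw hwaq ⊢
  intro s ℓ
  have ha : a < (w.set q false).length := by rw [List.length_set]; omega
  have ha1' : (w.set q false)[a] = true := by rw [List.getElem_set_ne haq.ne']; exact ha1
  have hPq (m : ℕ) := prefixWeight_eq_prefixWeight_set_false_add hq hq1 m
  have hPa (m : ℕ) : prefixWeight (w.set q false) m =
      prefixWeight ((w.set a false).set q false) m + if a < m then 1 else 0 := by
    rw [List.set_comm false false haq.ne]
    exact prefixWeight_eq_prefixWeight_set_false_add ha ha1' m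
  -- If `s, ℓ ≤ a` then the 1 at `q` is lost only on the left, so `hw` suffices; otherwise the
  -- 1 at `a` is counted on the right and `hwaq` suffices.
  have := hw s ℓ; have := hwaq s ℓ
  have := hPq s; have := hPq ℓ; have := hPq (s + ℓ)
  have := hPa s; have := hPa ℓ; have := hPa (s + ℓ)
  split_ifs at * <;> omega

section pnChain

variable {n : ℕ} (σ : Equiv.Perm (Fin n))

lemma pnChain_succ (k : ℕ) (h : k < n) :
    pnChain σ (k + 1) = (pnChain σ k).set (σ ⟨k, h⟩) false := by
  rw [pnChain, dif_pos h]

lemma pnChain_eq_ofFn (k : ℕ) :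
    pnChain σ k = List.ofFn fun i => decide (k ≤ (σ.symm i : ℕ)) := by
  induction k with
  | zero => simp [pnChain, List.ofFn_const]
  | succ k ih =>
    rw [pnChain, ih]
    split_ifs with hk
    · apply List.ext_getElem (by simp)
      intro i h₁ h₂
      simp only [List.getElem_set, List.getElem_ofFn]
      split_ifs with hi
      · simp [← hi]
      · have : (σ.symm ⟨i, by simpa using h₂⟩ : ℕ) ≠ k := by
          intro h
          rw [← show σ.symm ⟨i, _⟩ = ⟨k, hk⟩ from Fin.ext h] at hi
          simp at hi
        simp only [decide_eq_decide]
        omega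
    · congr with i
      have := (σ.symm i).isLt
      simp only [decide_eq_decide]
      omega

lemma getElem_pnChain_apply {k m : ℕ} (hm : m < n) (hkm : k ≤ m) :
    (pnChain σ k)[(σ ⟨m, hm⟩ : ℕ)]'(by simp [pnChain_eq_ofFn]) = true := by
  simp [pnChain_eq_ofFn, hkm]

lemma pnChain_mul_swap_of_ne {j : ℕ} (hj : j + 1 < n) {k : ℕ} (hk : k ≠ j + 1) :
    pnChain (σ * Equiv.swap ⟨j, j.lt_of_succ_lt hj⟩ ⟨j + 1, hj⟩) k = pnChain σ k := by
  simp only [pnChain_eq_ofFn]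
  congr with i
  rw [decide_eq_decide, Equiv.Perm.mul_def, Equiv.symm_trans_apply, Equiv.symm_swap,
    Equiv.swap_apply_def]
  split_ifs <;> simp only [Fin.ext_iff] at * <;> omega

end pnChain

/-- Swapping two adjacent entries of a prefix normal generator with the smaller one first
yields again a prefix normal generator. -/
theorem pnGen_swap_lt {n : ℕ} (σ : Equiv.Perm (Fin n)) (hσ : isPNGen σ)
    (j : ℕ) (hj : j + 1 < n)
    (hlt : σ ⟨j, by omega⟩ < σ ⟨j + 1, hj⟩) :
    isPNGen (σ * Equiv.swap ⟨j, by omega⟩ ⟨j + 1, hj⟩) := by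
  intro k hk
  obtain rfl | hkj := eq_or_ne k (j + 1)
  · have hσj₂ := hσ (j + 2) hj
    rw [pnChain_succ σ (j + 1) hj, pnChain_succ σ j (by omega)] at hσj₂
    rw [pnChain_succ _ j (by omega), pnChain_mul_swap_of_ne σ hj (by omega),
      Equiv.Perm.mul_apply, Equiv.swap_apply_left]
    exact prefixNormal_set_false_of_set_false_set_false hlt (by simp [pnChain_eq_ofFn])
      (getElem_pnChain_apply σ _ le_rfl) (getElem_pnChain_apply σ hj (by omega))
      (hσ j (by omega)) hσj₂
  · rw [pnChain_mul_swap_of_ne σ hj hkj]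
    exact hσ k hk
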